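/- Let $X \in \mathbb{C}^{n_1 \times (n_3 n_2)}$ be a matrix whose columns are indexed by pairs $(i_3, i_2) \in \{1,\dots,n_3\} \times \{1,\dots,n_2\}$ (the mode-1 unfolding of an $n_1 \times n_2 \times n_3$ tensor), and let $\Pi_1 \in \mathbb{C}^{n_1\times n_1}$, $\Pi_2 \in \mathbb{C}^{n_2\times n_2}$, $\Pi_3 \in \mathbb{C}^{n_3\times n_3}$ be orthogonal projections ($\Pi_j^* = \Pi_j$, $\Pi_j^2 = \Pi_j$). Then $\|X - \Pi_1 X (\Pi_3 \otimes \Pi_2)^*\|_F^2 \le \|X - \Pi_1 X\|_F^2 + \|X - X (I_{n_3} \otimes \Pi_2)^*\|_F^2 + \|X - X (\Pi_3 \otimes I_{n_2})^*\|_F^2$. -/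

import Mathlib

open scoped BigOperators Kronecker
open Matrix

/-- Squared Frobenius norm of a complex matrix. -/
noncomputable def frobSq {m n : Type*} [Fintype m] [Fintype n] (M : Matrix m n ℂ) : ℝ :=
  ∑ i, ∑ j, ‖M i j‖ ^ 2

/-!
Put `P = Π₁`, `Q = (Π₃ ⊗ I)^*` and `R = (I ⊗ Π₂)^*`, so that `(Π₃ ⊗ Π₂)^* = Q R` and
`X - P X Q R = P (X - X Q) R + P X (I - R) + (I - P) X`.
The last summand is orthogonal to the first two, which lie in the range of `P`, and these two
are orthogonal to each other, one ending in `R` and the other in `I - R`. So Pythagoras splits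
the squared norm into three pieces, and since multiplying by an orthogonal projection on either
side does not increase the Frobenius norm, each piece is bounded by the matching term on the right.
-/

theorem IsStarProjection.kronecker {α m n : Type*} [CommRing α] [StarRing α]
    [Fintype m] [Fintype n] {A : Matrix m m α} {B : Matrix n n α}
    (hA : IsStarProjection A) (hB : IsStarProjection B) : IsStarProjection (A ⊗ₖ B) where
  isIdempotentElem := by
    rw [IsIdempotentElem, ← mul_kronecker_mul, hA.isIdempotentElem.eq, hB.isIdempotentElem.eq]
  isSelfAdjoint := by
    rw [IsSelfAdjoint, star_eq_conjTranspose, conjTranspose_kronecker, ← star_eq_conjTranspose,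
      ← star_eq_conjTranspose, hA.isSelfAdjoint.star_eq, hB.isSelfAdjoint.star_eq]

section FrobeniusPythagoras

variable {m n : Type*} [Fintype m] [Fintype n]

lemma frobSq_nonneg (M : Matrix m n ℂ) : 0 ≤ frobSq M := by
  unfold frobSq
  positivity

lemma frobSq_conjTranspose (M : Matrix m n ℂ) : frobSq Mᴴ = frobSq M := by
  simp only [frobSq, conjTranspose_apply, norm_star]
  exact Finset.sum_comm

lemma frobSq_eq_re_trace (M : Matrix m n ℂ) : frobSq M = (Mᴴ * M).trace.re := by
  simp only [frobSq, trace, diag, mul_apply, conjTranspose_apply, Complex.re_sum,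
    Complex.star_def, ← Complex.normSq_eq_conj_mul_self, Complex.ofReal_re,
    Complex.normSq_eq_norm_sq]
  exact Finset.sum_comm

lemma frobSq_add_of_conjTranspose_mul_eq_zero {A B : Matrix m n ℂ} (h : Aᴴ * B = 0) :
    frobSq (A + B) = frobSq A + frobSq B := by
  have h' : Bᴴ * A = 0 := by
    rw [← conjTranspose_conjTranspose (Bᴴ * A), conjTranspose_mul, conjTranspose_conjTranspose, h,
      conjTranspose_zero]
  simp only [frobSq_eq_re_trace, conjTranspose_add, Matrix.add_mul, Matrix.mul_add, h, h',
    add_zero, zero_add, trace_add, Complex.add_re]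

lemma frobSq_add_of_mul_conjTranspose_eq_zero {A B : Matrix m n ℂ} (h : A * Bᴴ = 0) :
    frobSq (A + B) = frobSq A + frobSq B := by
  rw [← frobSq_conjTranspose, conjTranspose_add, frobSq_add_of_conjTranspose_mul_eq_zero
    (by rwa [conjTranspose_conjTranspose]), frobSq_conjTranspose, frobSq_conjTranspose]

end FrobeniusPythagoras

namespace IsStarProjection

variable {m n : Type*} [Fintype m] [Fintype n]

lemma frobSq_mul_add_one_sub_mul [DecidableEq m] {P : Matrix m m ℂ} (hP : IsStarProjection P)
    (A B : Matrix m n ℂ) :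
    frobSq (P * A + (1 - P) * B) = frobSq (P * A) + frobSq ((1 - P) * B) :=
  frobSq_add_of_conjTranspose_mul_eq_zero <| by
    rw [conjTranspose_mul, ← star_eq_conjTranspose P, hP.isSelfAdjoint.star_eq, Matrix.mul_assoc,
      ← Matrix.mul_assoc P, hP.mul_one_sub_self, Matrix.zero_mul, Matrix.mul_zero]

lemma frobSq_mul_add_mul_one_sub [DecidableEq n] {R : Matrix n n ℂ} (hR : IsStarProjection R)
    (A B : Matrix m n ℂ) :
    frobSq (A * R + B * (1 - R)) = frobSq (A * R) + frobSq (B * (1 - R)) :=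
  frobSq_add_of_mul_conjTranspose_eq_zero <| by
    rw [conjTranspose_mul, ← star_eq_conjTranspose (1 - R), hR.one_sub.isSelfAdjoint.star_eq,
      Matrix.mul_assoc, ← Matrix.mul_assoc R, hR.mul_one_sub_self, Matrix.zero_mul,
      Matrix.mul_zero]

lemma frobSq_mul_le_left [DecidableEq m] {P : Matrix m m ℂ} (hP : IsStarProjection P)
    (M : Matrix m n ℂ) : frobSq (P * M) ≤ frobSq M := by
  have hsplit : frobSq M = frobSq (P * M) + frobSq ((1 - P) * M) := by
    rw [← hP.frobSq_mul_add_one_sub_mul, ← Matrix.add_mul, add_sub_cancel, Matrix.one_mul]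
  linarith [frobSq_nonneg ((1 - P) * M)]

lemma frobSq_mul_le_right [DecidableEq n] {R : Matrix n n ℂ} (hR : IsStarProjection R)
    (M : Matrix m n ℂ) : frobSq (M * R) ≤ frobSq M := by
  have hsplit : frobSq M = frobSq (M * R) + frobSq (M * (1 - R)) := by
    rw [← hR.frobSq_mul_add_mul_one_sub, ← Matrix.mul_add, add_sub_cancel, Matrix.mul_one]
  linarith [frobSq_nonneg (M * (1 - R))]

end IsStarProjection

theorem frobSq_sub_mul_mul_mul_le {m n : Type*} [Fintype m] [Fintype n] [DecidableEq m]
    [DecidableEq n] (X : Matrix m n ℂ) {P : Matrix m m ℂ} (hP : IsStarProjection P)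
    (Q : Matrix n n ℂ) {R : Matrix n n ℂ} (hR : IsStarProjection R) :
    frobSq (X - P * X * (Q * R)) ≤
      frobSq (X - P * X) + frobSq (X - X * R) + frobSq (X - X * Q) := by
  have hdecomp : X - P * X * (Q * R) =
      P * ((X - X * Q) * R + X * (1 - R)) + (1 - P) * X := by
    simp only [Matrix.mul_add, Matrix.mul_sub, Matrix.sub_mul, Matrix.mul_one, Matrix.one_mul,
      Matrix.mul_assoc]
    abel
  have hsplit : frobSq (X - P * X * (Q * R)) =
      frobSq (P * (X - X * Q) * R) + frobSq (P * X * (1 - R)) + frobSq (X - P * X) := by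
    rw [hdecomp, hP.frobSq_mul_add_one_sub_mul, Matrix.mul_add, ← Matrix.mul_assoc,
      ← Matrix.mul_assoc, hR.frobSq_mul_add_mul_one_sub, Matrix.sub_mul, Matrix.one_mul]
  have hQ : frobSq (P * (X - X * Q) * R) ≤ frobSq (X - X * Q) :=
    (hR.frobSq_mul_le_right _).trans (hP.frobSq_mul_le_left _)
  have hR' : frobSq (P * X * (1 - R)) ≤ frobSq (X - X * R) := by
    rw [Matrix.mul_assoc, show X - X * R = X * (1 - R) by rw [Matrix.mul_sub, Matrix.mul_one]]
    exact hP.frobSq_mul_le_left _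
  linarith

theorem hybrid_projection_lemma_order3_general {n1 n2 n3 : ℕ}
    (X : Matrix (Fin n1) (Fin n3 × Fin n2) ℂ)
    (Pi1 : Matrix (Fin n1) (Fin n1) ℂ)
    (Pi2 : Matrix (Fin n2) (Fin n2) ℂ)
    (Pi3 : Matrix (Fin n3) (Fin n3) ℂ)
    (hP1star : Pi1ᴴ = Pi1) (hP1idem : Pi1 * Pi1 = Pi1)
    (hP2star : Pi2ᴴ = Pi2) (hP2idem : Pi2 * Pi2 = Pi2) :
    frobSq (X - Pi1 * X * (Pi3 ⊗ₖ Pi2)ᴴ) ≤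
      frobSq (X - Pi1 * X)
      + frobSq (X - X * ((1 : Matrix (Fin n3) (Fin n3) ℂ) ⊗ₖ Pi2)ᴴ)
      + frobSq (X - X * (Pi3 ⊗ₖ (1 : Matrix (Fin n2) (Fin n2) ℂ))ᴴ) := by
  have hR : IsStarProjection ((1 : Matrix (Fin n3) (Fin n3) ℂ) ⊗ₖ Pi2) :=
    (IsStarProjection.one _).kronecker ⟨hP2idem, hP2star⟩
  have hfactor : (Pi3 ⊗ₖ Pi2)ᴴ =
      (Pi3 ⊗ₖ (1 : Matrix (Fin n2) (Fin n2) ℂ))ᴴ * ((1 : Matrix (Fin n3) (Fin n3) ℂ) ⊗ₖ Pi2)ᴴ := by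
    rw [← conjTranspose_mul, ← mul_kronecker_mul, Matrix.one_mul, Matrix.mul_one]
  rw [hfactor, ← star_eq_conjTranspose (1 ⊗ₖ Pi2), hR.isSelfAdjoint.star_eq]
  exact frobSq_sub_mul_mul_mul_le X ⟨hP1idem, hP1star⟩ _ hR

/-- Order-3 projection lemma, expressed via the mode-1 unfolding
`X ∈ ℂ^{n₁ × (n₃ n₂)}`:
`‖X - Π₁ X (Π₃ ⊗ Π₂)^*‖_F² ≤ ‖X - Π₁ X‖_F² + ‖X - X (I ⊗ Π₂)^*‖_F² + ‖X - X (Π₃ ⊗ I)^*‖_F²`. -/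
theorem hybrid_projection_lemma_order3 {n1 n2 n3 : ℕ}
    (X : Matrix (Fin n1) (Fin n3 × Fin n2) ℂ)
    (Pi1 : Matrix (Fin n1) (Fin n1) ℂ)
    (Pi2 : Matrix (Fin n2) (Fin n2) ℂ)
    (Pi3 : Matrix (Fin n3) (Fin n3) ℂ)
    (hP1star : Pi1ᴴ = Pi1) (hP1idem : Pi1 * Pi1 = Pi1)
    (hP2star : Pi2ᴴ = Pi2) (hP2idem : Pi2 * Pi2 = Pi2)
    (hP3star : Pi3ᴴ = Pi3) (hP3idem : Pi3 * Pi3 = Pi3) :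
    frobSq (X - Pi1 * X * (Pi3 ⊗ₖ Pi2)ᴴ) ≤
      frobSq (X - Pi1 * X)
      + frobSq (X - X * ((1 : Matrix (Fin n3) (Fin n3) ℂ) ⊗ₖ Pi2)ᴴ)
      + frobSq (X - X * (Pi3 ⊗ₖ (1 : Matrix (Fin n2) (Fin n2) ℂ))ᴴ) :=
  hybrid_projection_lemma_order3_general X Pi1 Pi2 Pi3 hP1star hP1idem hP2star hP2idem
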